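/- Let φ : ℝ^n → ℝ be twice continuously differentiable and convex. Then det(∇²φ(x)) = 0 for all x ∈ ℝ^n if and only if there exist a nonzero vector v ∈ ℝ^n and a constant c ∈ ℝ such that ⟨v, ∇φ(x)⟩ = c for all x ∈ ℝ^n (i.e., φ has a direction of linearity). -/

import Mathlib

/-!
If `⟪v, ∇φ⟫` is constant then `v` is orthogonal to the range of the derivative of `∇φ`, so the
Hessian is singular. Conversely, if the Hessian is singular everywhere then the range of `∇φ`
is Lebesgue-null by the Jacobian form of Sard's lemma. For convex `φ`, however, that range
contains the interior of the convex hull of any finite set `V` of its values: for `y` in this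
interior, the supporting hyperplanes of `φ` at preimages of `V` make `φ - ⟪y, ·⟫` coercive, so it
has a minimum, where `∇φ = y`. Hence the range of `∇φ` lies in a proper affine subspace, and
any normal vector to it is a direction of linearity.
-/

open RealInnerProductSpace

/-- The Hessian matrix of a function `φ : ℝⁿ → ℝ` at a point `x`,
whose `(i,j)` entry is the second partial derivative `∂²φ/∂xᵢ∂xⱼ (x)`. -/
noncomputable def hess {n : ℕ} (φ : EuclideanSpace ℝ (Fin n) → ℝ)
    (x : EuclideanSpace ℝ (Fin n)) : Matrix (Fin n) (Fin n) ℝ :=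
  Matrix.of fun i j =>
    fderiv ℝ (fun y => fderiv ℝ φ y (EuclideanSpace.single j 1)) x (EuclideanSpace.single i 1)

open Set Metric Filter MeasureTheory

section Convex

variable {E : Type*} [NormedAddCommGroup E] [NormedSpace ℝ E] {f : E → ℝ} {s : Set E}

theorem ConvexOn.add_fderiv_sub_le (hf : ConvexOn ℝ s f) {z x : E} (hz : z ∈ s) (hx : x ∈ s)
    (hd : DifferentiableAt ℝ f z) : f z + fderiv ℝ f z (x - z) ≤ f x := by
  set L : ℝ →ᵃ[ℝ] E := AffineMap.lineMap z x
  have hderiv : HasDerivAt (f ∘ L) (fderiv ℝ f z (x - z)) 0 :=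
    hd.hasFDerivAt.comp_hasDerivAt_of_eq 0 AffineMap.hasDerivAt_lineMap (by simp [L])
  have := (hf.comp_affineMap L).le_slope_of_hasDerivAt (x := 0) (y := 1) (by simpa [L])
    (by simpa [L]) one_pos hderiv
  simp only [slope_def_field, L, Function.comp_apply, AffineMap.lineMap_apply_zero,
    AffineMap.lineMap_apply_one, sub_zero, div_one] at this
  linarith

end Convex

section InnerProductSpace

variable {E : Type*} [NormedAddCommGroup E] [InnerProductSpace ℝ E]

theorem exists_inner_ge_of_closedBall_subset_convexHull {V : Set E} {y : E} {ε : ℝ}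
    (hε : 0 ≤ ε) (hball : closedBall y ε ⊆ convexHull ℝ V) (x : E) :
    ∃ p ∈ V, ⟪y, x⟫ + ε * ‖x‖ ≤ ⟪p, x⟫ := by
  set q := y + (ε / ‖x‖) • x
  have hq : q ∈ convexHull ℝ V := by
    refine hball (mem_closedBall_iff_norm.2 ?_)
    rcases eq_or_ne x 0 with rfl | hx
    · simpa [q] using hε
    · simp [q, norm_smul, abs_of_nonneg hε, hx]
  have hxq : ⟪x, q⟫ = ⟪x, y⟫ + ε * ‖x‖ := by
    rw [inner_add_right, real_inner_smul_right, real_inner_self_eq_norm_mul_norm,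
      div_mul_eq_mul_div, mul_div_assoc, mul_self_div_self]
  obtain ⟨p, hp, hle⟩ := ((innerSL ℝ x : E →L[ℝ] ℝ) : E →ₗ[ℝ] ℝ).convexOn
    (convex_convexHull ℝ V) |>.exists_ge_of_mem_convexHull (subset_convexHull ℝ V) hq
  exact ⟨p, hp, by simpa only [real_inner_comm x] using hxq ▸ hle⟩

variable [ProperSpace E] {φ : E → ℝ}

theorem ConvexOn.interior_convexHull_subset_range_gradient (hconv : ConvexOn ℝ univ φ)
    (hdiff : Differentiable ℝ φ) {V : Set E} (hVfin : V.Finite) (hV : V ⊆ range (gradient φ)) :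
    interior (convexHull ℝ V) ⊆ range (gradient φ) := by
  intro y hy
  obtain ⟨ε, hε, hball⟩ := nhds_basis_closedBall.mem_iff.1 (mem_interior_iff_mem_nhds.1 hy)
  choose! z hz using show ∀ p ∈ V, ∃ z, gradient φ z = p from hV
  obtain ⟨C, hC⟩ := (hVfin.image fun p => φ (z p) - ⟪p, z p⟫).bddBelow
  set ψ : E → ℝ := fun x => φ x - ⟪y, x⟫
  have hcoercive : ∀ x, C + ε * ‖x‖ ≤ ψ x := by
    intro x
    obtain ⟨p, hp, hpx⟩ := exists_inner_ge_of_closedBall_subset_convexHull hε.le hball x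
    have hsupport := hconv.add_fderiv_sub_le (mem_univ (z p)) (mem_univ x) (hdiff _)
    rw [← inner_gradient_left, hz p hp, inner_sub_right] at hsupport
    have hCp : C ≤ φ (z p) - ⟪p, z p⟫ := hC ⟨p, hp, rfl⟩
    show C + ε * ‖x‖ ≤ φ x - ⟪y, x⟫
    linarith
  have hψ : Tendsto ψ (cocompact E) atTop :=
    tendsto_atTop_mono hcoercive <| tendsto_atTop_add_const_left _ C <|
      tendsto_norm_cocompact_atTop.const_mul_atTop hε
  have hψc : Continuous ψ := hdiff.continuous.sub (continuous_const.inner continuous_id)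
  obtain ⟨x₀, hx₀⟩ := hψc.exists_forall_le hψ
  have hmin : IsLocalMin ψ x₀ := (isMinOn_univ_iff.2 hx₀).isLocalMin univ_mem
  have hcrit :=
    hmin.hasFDerivAt_eq_zero ((hdiff x₀).hasFDerivAt.sub (innerSL ℝ y).hasFDerivAt)
  refine ⟨x₀, ext_inner_right ℝ fun w => ?_⟩
  have := congr($hcrit w)
  simpa [sub_eq_zero] using this

end InnerProductSpace

section FiniteDimensional

variable {E : Type*} [NormedAddCommGroup E] [InnerProductSpace ℝ E] [FiniteDimensional ℝ E]

theorem exists_inner_eq_const_of_affineSpan_ne_top {s : Set E} (hs : s.Nonempty)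
    (htop : affineSpan ℝ s ≠ ⊤) : ∃ v ≠ 0, ∃ c, ∀ p ∈ s, ⟪v, p⟫ = c := by
  obtain ⟨p₀, hp₀⟩ := hs
  have hdir : (vectorSpan ℝ s)ᗮ ≠ ⊥ := by
    rwa [ne_eq, Submodule.orthogonal_eq_bot_iff,
      ← AffineSubspace.affineSpan_eq_top_iff_vectorSpan_eq_top_of_nonempty ℝ E E ⟨p₀, hp₀⟩]
  obtain ⟨v, hv, hv0⟩ := Submodule.exists_mem_ne_zero_of_ne_bot hdir
  refine ⟨v, hv0, ⟪v, p₀⟫, fun p hp => ?_⟩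
  have := Submodule.inner_left_of_mem_orthogonal (vsub_mem_vectorSpan ℝ hp hp₀) hv
  rwa [vsub_eq_sub, inner_sub_right, sub_eq_zero] at this

theorem LinearMap.det_eq_zero_of_inner_apply_eq_zero {L : E →ₗ[ℝ] E} {v : E} (hv : v ≠ 0)
    (h : ∀ u, ⟪v, L u⟫ = 0) : L.det = 0 := by
  by_contra hdet
  obtain ⟨u, rfl⟩ := ((Module.End.isUnit_iff L).1
    ((LinearMap.isUnit_iff_isUnit_det L).2 (isUnit_iff_ne_zero.2 hdet))).2 v
  exact hv (inner_self_eq_zero.1 (h u))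

theorem ConvexOn.affineSpan_range_gradient_ne_top [MeasurableSpace E] [BorelSpace E]
    (μ : Measure E) [μ.IsAddHaarMeasure] {φ : E → ℝ} (hconv : ConvexOn ℝ univ φ)
    (hdiff : Differentiable ℝ φ) (hnull : μ (range (gradient φ)) = 0) :
    affineSpan ℝ (range (gradient φ)) ≠ ⊤ := by
  intro htop
  obtain ⟨V, hV, hspan, hind⟩ := exists_affineIndependent ℝ E (range (gradient φ))
  have hint : (interior (convexHull ℝ V)).Nonempty :=
    interior_convexHull_nonempty_iff_affineSpan_eq_top.2 (hspan.trans htop)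
  have hsub := hconv.interior_convexHull_subset_range_gradient hdiff
    (finite_set_of_fin_dim_affineIndependent ℝ hind) hV
  exact (isOpen_interior.measure_pos μ hint).ne' (measure_mono_null hsub hnull)

end FiniteDimensional

theorem ContDiff.differentiable_gradient {E : Type*} [NormedAddCommGroup E]
    [InnerProductSpace ℝ E] [CompleteSpace E] {φ : E → ℝ} (hφ : ContDiff ℝ 2 φ) :
    Differentiable ℝ (gradient φ) :=
  (InnerProductSpace.toDual ℝ E).symm.differentiable.comp
    ((hφ.fderiv_right le_rfl).differentiable one_ne_zero)

theorem HasFDerivAt.inner_apply_eq_zero_of_inner_eq_const {E F : Type*} [NormedAddCommGroup E]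
    [NormedSpace ℝ E] [NormedAddCommGroup F] [InnerProductSpace ℝ F] {g : E → F}
    {g' : E →L[ℝ] F} {x : E} (hg : HasFDerivAt g g' x) {v : F} {c : ℝ}
    (hc : ∀ y, ⟪v, g y⟫ = c) (u : E) : ⟪v, g' u⟫ = 0 := by
  have hconst := (innerSL ℝ v).hasFDerivAt.comp x hg
  rw [show (innerSL ℝ v ∘ g) = fun _ => c from funext hc] at hconst
  simpa using congr($((hasFDerivAt_const c x).unique hconst) u).symm

section Euclidean

variable {n : ℕ} {φ : EuclideanSpace ℝ (Fin n) → ℝ} {x : EuclideanSpace ℝ (Fin n)}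

theorem fderiv_gradient_apply (hg : DifferentiableAt ℝ (gradient φ) x)
    (u : EuclideanSpace ℝ (Fin n)) (i : Fin n) :
    fderiv ℝ (gradient φ) x u i =
      fderiv ℝ (fun y => fderiv ℝ φ y (EuclideanSpace.single i 1)) x u := by
  have hcoord : (fun y => fderiv ℝ φ y (EuclideanSpace.single i 1)) =
      EuclideanSpace.proj i ∘ gradient φ := by
    ext y
    simp [← inner_gradient_left, EuclideanSpace.inner_single_right]
  rw [hcoord, ((EuclideanSpace.proj i).hasFDerivAt.comp x hg.hasFDerivAt).fderiv]
  rfl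

theorem det_fderiv_gradient (hg : DifferentiableAt ℝ (gradient φ) x) :
    (fderiv ℝ (gradient φ) x).det = (hess φ x).det := by
  let b := (EuclideanSpace.basisFun (Fin n) ℝ).toBasis
  have hmatrix : LinearMap.toMatrix b b (fderiv ℝ (gradient φ) x) = (hess φ x).transpose := by
    ext i j
    simp [LinearMap.toMatrix_apply, b, hess, fderiv_gradient_apply hg]
  rw [ContinuousLinearMap.det, ← LinearMap.det_toMatrix b, hmatrix, Matrix.det_transpose]

end Euclidean

/-- For a twice continuously differentiable convex function, the Hessian
determinant vanishes identically if and only if the function has a (global)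
direction of linearity. -/
theorem convex_hessian_det_zero_iff_direction_of_linearity {n : ℕ}
    (φ : EuclideanSpace ℝ (Fin n) → ℝ)
    (hsmooth : ContDiff ℝ 2 φ) (hconv : ConvexOn ℝ Set.univ φ) :
    (∀ x, (hess φ x).det = 0) ↔
      ∃ v : EuclideanSpace ℝ (Fin n), v ≠ 0 ∧ ∃ c : ℝ, ∀ x, ⟪v, gradient φ x⟫ = c := by
  have hg := hsmooth.differentiable_gradient
  constructor
  · intro hdet
    have hnull : volume (range (gradient φ)) = 0 := by
      rw [← image_univ]
      refine addHaar_image_eq_zero_of_det_fderivWithin_eq_zero volume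
        (fun x _ => (hg x).hasFDerivAt.hasFDerivWithinAt) fun x _ => ?_
      rw [det_fderiv_gradient (hg x), hdet x]
    obtain ⟨v, hv, c, hc⟩ := exists_inner_eq_const_of_affineSpan_ne_top (range_nonempty _)
      (hconv.affineSpan_range_gradient_ne_top volume (hsmooth.differentiable two_ne_zero) hnull)
    exact ⟨v, hv, c, fun x => hc _ (mem_range_self x)⟩
  · rintro ⟨v, hv, c, hc⟩ x
    rw [← det_fderiv_gradient (hg x)]
    exact LinearMap.det_eq_zero_of_inner_apply_eq_zero hv
      ((hg x).hasFDerivAt.inner_apply_eq_zero_of_inner_eq_const hc)
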